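/- arXiv:2205.14904 — 5 statements merged into one kernel-verified Lean document; each statement's English description precedes it below -/
import Mathlib

section
/- Let $q$ be a prime power, $n \geq 1$, and let $M : \mathrm{Fin}\,n \to \mathrm{Fin}\,n \to \mathbb{N}$ be a matrix of natural numbers such that every row sum and every column sum of $M$ equals $q$ (i.e., $M$ is the biadjacency matrix of a $q$-regular bipartite multigraph with parts $U$ and $V$ each of size $n$). Let $\alpha : \mathrm{Fin}\,n \to \mathbb{Z}/q\mathbb{Z}$ be an arbitrary assignment. If the permanent of $M$, namely $\sum_{\sigma \in S_n} \prod_{i} M(i, \sigma(i))$, is not congruent to $0$ modulo $q$, then there exists a matrix $N : \mathrm{Fin}\,n \to \mathrm{Fin}\,n \to \mathbb{N}$ with $N(i,j) \leq M(i,j)$ for all $i,j$, such that every row sum of $N$ equals $1$, and for every $j$ the column sum $\sum_i N(i,j)$ is not congruent to $\alpha(j)$ modulo $q$. -/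
/-!
For `f : Fin n → Fin n` (one edge chosen at each `uᵢ`) let `w f = ∏ i, M i (f i)` and let `d f j`
be the number of `i` with `f i = j`. Modulo `q`,
`∑ f, w f * ∏ j, (d f j - α j) = per M`.
Indeed, writing `d f j - α j = -α j + ∑ i, [f i = j]` and expanding, the terms are indexed by
`g : Fin n → Option (Fin n)`, and summing over `f` factors row by row: a row `i` with no
`g`-preimage contributes its row sum `q ≡ 0`, a row with two preimages contributes `0`. Only
`g = some ∘ σ⁻¹` for a permutation `σ` survives, contributing `∏ i, M i (σ i)`.
If no antifactor existed, every `f` of nonzero weight would have a column with `d f j = α j`, so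
the left side would vanish although `per M ≢ 0`.
-/

open Finset

section

variable {n R : Type*} [Fintype n] [DecidableEq n] [CommRing R]

theorem sum_mul_prod_ite_eq_eq_zero {s : Finset n} (hs : #s ≠ 1) {a : n → R}
    (ha : ∑ k, a k = 0) : ∑ k, a k * ∏ j ∈ s, (if k = j then 1 else 0) = 0 := by
  rcases Nat.lt_or_gt_of_ne hs with hs | hs
  · simp [card_eq_zero.mp (Nat.lt_one_iff.mp hs), ha]
  · obtain ⟨x, hx, y, hy, hxy⟩ := one_lt_card.mp hs
    refine sum_eq_zero fun k _ => mul_eq_zero_of_right _ ?_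
    by_cases hkx : k = x
    · exact prod_eq_zero hy (by simp [hkx, hxy])
    · exact prod_eq_zero hx (by simp [hkx])

theorem exists_perm_of_card_fiber_eq_one (g : n → Option n)
    (hg : ∀ i, #{j | g j = some i} = 1) :
    ∃ σ : Equiv.Perm n, Option.some ∘ σ.symm = g := by
  choose s hs using fun i => card_eq_one.mp (hg i)
  have hgs : ∀ i, g (s i) = some i := fun i => by
    simpa using (Finset.ext_iff.mp (hs i) (s i)).mpr (mem_singleton_self _)
  have hbij : Function.Bijective s := Finite.injective_iff_bijective.mp
    fun i i' h => Option.some_injective _ <| by rw [← hgs, ← hgs, h]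
  refine ⟨Equiv.ofBijective s hbij, funext fun j => ?_⟩
  conv_rhs => rw [← Equiv.ofBijective_apply_symm_apply s hbij j]
  exact (hgs _).symm

theorem prod_preimage_count_sub_eq_sum (f : n → n) (α : n → R) :
    ∏ j, ((∑ i, if f i = j then 1 else 0) - α j) =
      ∑ g : n → Option n, (∏ j with g j = none, -α j) *
        ∏ i, ∏ j with g j = some i, (if f i = j then 1 else 0) := by
  calc ∏ j, ((∑ i, if f i = j then 1 else 0) - α j)
      = ∏ j, ∑ o : Option n, o.elim (-α j) fun i => if f i = j then 1 else 0 := by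
        simp only [Fintype.sum_option, Option.elim_none, Option.elim_some]
        exact prod_congr rfl fun j _ => by ring
    _ = ∑ g : n → Option n, ∏ j, (g j).elim (-α j) fun i => if f i = j then 1 else 0 :=
        Fintype.prod_sum _
    _ = _ := sum_congr rfl fun g _ => by
        rw [← prod_fiberwise univ g, Fintype.prod_option]
        congr 1
        · exact prod_congr rfl fun j hj => by simp [(mem_filter.mp hj).2]
        · exact prod_congr rfl fun i _ => prod_congr rfl fun j hj => by
            simp [(mem_filter.mp hj).2]

theorem sum_prod_mul_prod_fiber_eq (A : n → n → R) (g : n → Option n) :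
    ∑ f : n → n, (∏ i, A i (f i)) * ∏ i, ∏ j with g j = some i, (if f i = j then 1 else 0) =
      ∏ i, ∑ k, A i k * ∏ j with g j = some i, (if k = j then 1 else 0) := by
  rw [Fintype.prod_sum]
  simp only [prod_mul_distrib]

theorem sum_prod_mul_prod_preimage_count_sub_eq_perm (A : n → n → R)
    (hA : ∀ i, ∑ k, A i k = 0) (α : n → R) :
    ∑ f : n → n, (∏ i, A i (f i)) * ∏ j, ((∑ i, if f i = j then 1 else 0) - α j) =
      ∑ σ : Equiv.Perm n, ∏ i, A i (σ i) := by
  calc _ = ∑ g : n → Option n, (∏ j with g j = none, -α j) *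
          ∏ i, ∑ k, A i k * ∏ j with g j = some i, (if k = j then 1 else 0) := by
        simp_rw [prod_preimage_count_sub_eq_sum, mul_sum]
        rw [sum_comm]
        refine sum_congr rfl fun g _ => ?_
        rw [← sum_prod_mul_prod_fiber_eq, mul_sum]
        exact sum_congr rfl fun f _ => by ring
    _ = _ := by
      refine (Fintype.sum_of_injective (fun σ : Equiv.Perm n => Option.some ∘ σ.symm)
        (fun σ τ h => ?_) _ _ (fun g hg => ?_) fun σ => ?_).symm
      · exact Equiv.symm_bijective.injective <|
          Equiv.ext fun j => Option.some_injective _ (congr_fun h j)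
      · by_contra hne
        obtain ⟨σ, rfl⟩ := exists_perm_of_card_fiber_eq_one g fun i => by
          by_contra hi
          exact hne <| mul_eq_zero_of_right _ <|
            prod_eq_zero (mem_univ i) (sum_mul_prod_ite_eq_eq_zero hi (hA i))
        exact hg ⟨σ, rfl⟩
      · simp [Equiv.symm_apply_eq, filter_eq']

end

theorem antifactor_bipartite_multigraph_general
    (q n : ℕ)
    (M : Fin n → Fin n → ℕ)
    (hrow : ∀ i, ∑ j, M i j = q)
    (α : Fin n → ZMod q)
    (hpm : ((∑ σ : Equiv.Perm (Fin n), ∏ i, M i (σ i) : ℕ) : ZMod q) ≠ 0) :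
    ∃ N : Fin n → Fin n → ℕ,
      (∀ i j, N i j ≤ M i j) ∧
      (∀ i, ∑ j, N i j = 1) ∧
      (∀ j, ((∑ i, N i j : ℕ) : ZMod q) ≠ α j) := by
  by_contra! hnone
  have hrow' : ∀ i, ∑ k, (M i k : ZMod q) = 0 := fun i => by
    rw [← Nat.cast_sum, hrow, ZMod.natCast_self]
  refine hpm ?_
  push_cast
  rw [← sum_prod_mul_prod_preimage_count_sub_eq_perm _ hrow' α]
  refine sum_eq_zero fun f _ => ?_
  by_cases hM : ∃ i, M i (f i) = 0
  · obtain ⟨i, hi⟩ := hM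
    exact mul_eq_zero_of_left (prod_eq_zero (mem_univ i) (by simp [hi])) _
  · push Not at hM
    obtain ⟨j, hj⟩ := hnone (fun i j => if f i = j then 1 else 0)
      (fun i j => by
        split_ifs with h
        · exact h ▸ Nat.one_le_iff_ne_zero.mpr (hM i)
        · exact Nat.zero_le _)
      (fun i => by simp)
    push_cast at hj
    exact mul_eq_zero_of_right _ (prod_eq_zero (mem_univ j) (by rw [hj, sub_self]))

theorem antifactor_bipartite_multigraph
    (q n : ℕ) (hq : IsPrimePow q) (hn : 1 ≤ n)
    (M : Fin n → Fin n → ℕ)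
    (hrow : ∀ i, ∑ j, M i j = q)
    (hcol : ∀ j, ∑ i, M i j = q)
    (α : Fin n → ZMod q)
    (hpm : ((∑ σ : Equiv.Perm (Fin n), ∏ i, M i (σ i) : ℕ) : ZMod q) ≠ 0) :
    ∃ N : Fin n → Fin n → ℕ,
      (∀ i j, N i j ≤ M i j) ∧
      (∀ i, ∑ j, N i j = 1) ∧
      (∀ j, ((∑ i, N i j : ℕ) : ZMod q) ≠ α j) :=
  antifactor_bipartite_multigraph_general q n M hrow α hpm
end

section
/- Let $q$ be a prime power and let $F$ be a finite field with $|F| = q$. Let $f \in F[x_1, \ldots, x_n]$ be a multivariate polynomial of total degree at most $(q-1)n$, and suppose that the coefficient of the monomial $\prod_{i=1}^n x_i^{q-1}$ in $f$ is nonzero. Then there exists $(s_1, \ldots, s_n) \in F^n$ such that $f(s_1, \ldots, s_n) \neq 0$. -/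
open Finset MvPolynomial

theorem MvPolynomial.exists_eval_ne_zero_of_coeff_ne_zero_of_totalDegree_le
    {R σ : Type*} [CommRing R] [IsDomain R] [Fintype R] [Finite σ]
    {f : MvPolynomial σ R} {t : σ →₀ ℕ} (ht : f.coeff t ≠ 0)
    (hdeg : f.totalDegree ≤ t.degree) (hcard : ∀ i, t i < Fintype.card R) :
    ∃ s : σ → R, eval s f ≠ 0 := by
  have hdeg_eq : f.totalDegree = t.degree :=
    hdeg.antisymm (le_totalDegree (mem_support_iff.mpr ht))
  obtain ⟨s, -, hs⟩ :=
    combinatorial_nullstellensatz_exists_eval_nonzero f t ht hdeg_eq (fun _ ↦ univ) hcard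
  exact ⟨s, hs⟩

theorem CN_corollary_finite_field_general
    (q n : ℕ)
    (F : Type*) [Field F] [Fintype F] (hcard : Fintype.card F = q)
    (f : MvPolynomial (Fin n) F)
    (hdeg : f.totalDegree ≤ (q - 1) * n)
    (hcoeff : MvPolynomial.coeff (Finsupp.equivFunOnFinite.symm fun _ : Fin n => q - 1) f ≠ 0) :
    ∃ s : Fin n → F, MvPolynomial.eval s f ≠ 0 := by
  refine exists_eval_ne_zero_of_coeff_ne_zero_of_totalDegree_le hcoeff ?_ fun _ ↦ ?_
  · simpa [Finsupp.degree_eq_sum, mul_comm] using hdeg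
  · simpa [← hcard] using Fintype.card_pos

theorem CN_corollary_finite_field
    (q n : ℕ) (hq : IsPrimePow q)
    (F : Type*) [Field F] [Fintype F] (hcard : Fintype.card F = q)
    (f : MvPolynomial (Fin n) F)
    (hdeg : f.totalDegree ≤ (q - 1) * n)
    (hcoeff : MvPolynomial.coeff (Finsupp.equivFunOnFinite.symm fun _ : Fin n => q - 1) f ≠ 0) :
    ∃ s : Fin n → F, MvPolynomial.eval s f ≠ 0 :=
  CN_corollary_finite_field_general q n F hcard f hdeg hcoeff
end

section
/- Let $q$ be a prime power, $F$ a finite field with $|F| = q$, and $n \geq 1$. Suppose we are given a family of permutations $(\sigma_k)_{k \in F}$ of $\mathrm{Fin}\,n$, indexed by the elements of $F$ (this encodes a proper $q$-edge-coloring of a $q$-regular bipartite multigraph: the edge of color $k$ at the $j$-th right vertex joins it to the left vertex $\sigma_k^{-1}(j)$, and the multigraph's biadjacency matrix is $M(i,j) = |\{k \in F : \sigma_k(i) = j\}|$). Let $\alpha : \mathrm{Fin}\,n \to F$, and define the polynomial $f \in F[x_1, \ldots, x_n]$ by $f = \prod_{j=1}^{n} \Big[ \Big( \sum_{k \in F}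 \big(1 - (x_{\sigma_k^{-1}(j)} - k)^{q-1}\big) \Big) - \alpha(j) \Big]$. Then the coefficient of the monomial $\prod_{i=1}^n x_i^{q-1}$ in $f$ equals $(-1)^n \cdot \mathrm{per}(M)$, where $\mathrm{per}(M) = \sum_{\sigma \in S_n} \prod_i M(i, \sigma(i))$ is the permanent of $M$ (the number of perfect matchings of the multigraph), cast from $\mathbb{N}$ into $F$. -/
/-!
Each factor of `f` is `-∑ₖ x_{σₖ⁻¹ j}^(q-1)` plus terms of total degree `< q - 1`, while the
target monomial has the top degree `n (q - 1)`; so only the product of these leading forms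
contributes. Regrouped by variables, the leading form of factor `j` is `-∑ᵢ M i j • xᵢ^(q-1)`,
and in `∏ⱼ ∑ᵢ M i j • xᵢ^(q-1)` a choice of one variable per factor yields `∏ᵢ xᵢ^(q-1)`
exactly when the choice is a permutation, which gives the permanent.
-/

open MvPolynomial Finset Function

theorem Finsupp.sum_single_eq_equivFunOnFinite_symm_const_iff {κ : Type*} [Fintype κ]
    (g : κ → κ) {d : ℕ} (hd : d ≠ 0) :
    ∑ j, Finsupp.single (g j) d = Finsupp.equivFunOnFinite.symm (fun _ => d) ↔ Bijective g := by
  constructor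
  · intro h
    refine Finite.surjective_iff_bijective.mp fun i => ?_
    have hi := DFunLike.congr_fun h i
    rw [Finsupp.finsetSum_apply, Finsupp.coe_equivFunOnFinite_symm] at hi
    obtain ⟨j, -, hj⟩ := exists_ne_zero_of_sum_ne_zero (hi ▸ hd)
    exact ⟨j, by_contra fun hne => hj (Finsupp.single_eq_of_ne (Ne.symm hne))⟩
  · intro hg
    ext i
    rw [Finsupp.finsetSum_apply, Fintype.sum_bijective g hg _ (fun j => Finsupp.single j d i)
      fun _ => rfl]
    simp

namespace MvPolynomial

variable {σ R : Type*}

section CommRing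

variable [CommRing R]

theorem coeff_prod_eq_coeff_prod_of_totalDegree_sub_lt {ι : Type*} [DecidableEq ι]
    (s : Finset ι) (P Q : ι → MvPolynomial σ R) (a : ι → ℕ)
    (hQ : ∀ j ∈ s, (Q j).totalDegree ≤ a j) (hPQ : ∀ j ∈ s, (P j - Q j).totalDegree < a j)
    {m : σ →₀ ℕ} (hm : m.degree = ∑ j ∈ s, a j) :
    coeff m (∏ j ∈ s, P j) = coeff m (∏ j ∈ s, Q j) := by
  have hsplit : ∏ j ∈ s, P j = ∏ j ∈ s, (Q j + (P j - Q j)) := by simp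
  rw [hsplit, prod_add, coeff_sum, sum_eq_single_of_mem s (mem_powerset_self s), sdiff_self,
    bot_eq_empty, prod_empty, mul_one]
  intro u hmem hus
  have hu : u ⊆ s := mem_powerset.mp hmem
  have hrest : (s \ u).Nonempty := sdiff_nonempty.mpr fun h => hus (hu.antisymm h)
  apply coeff_eq_zero_of_totalDegree_lt
  rw [← Finsupp.degree_apply, hm, ← sum_sdiff hu, add_comm]
  calc ((∏ j ∈ u, Q j) * ∏ j ∈ s \ u, (P j - Q j)).totalDegree
      ≤ ∑ j ∈ u, (Q j).totalDegree + ∑ j ∈ s \ u, (P j - Q j).totalDegree :=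
        (totalDegree_mul _ _).trans
          (add_le_add (totalDegree_finsetProd _ _) (totalDegree_finsetProd _ _))
    _ < ∑ j ∈ u, a j + ∑ j ∈ s \ u, a j :=
        add_lt_add_of_le_of_lt (sum_le_sum fun j hj => hQ j (hu hj))
          (sum_lt_sum_of_nonempty hrest fun j hj => hPQ j (mem_sdiff.mp hj).1)

theorem totalDegree_pow_sub_pow_le {p q : MvPolynomial σ R} (hp : p.totalDegree ≤ 1)
    (hq : q.totalDegree ≤ 1) (d : ℕ) :
    (p ^ d - q ^ d).totalDegree ≤ d - 1 + (p - q).totalDegree := by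
  rw [← geom_sum₂_mul]
  refine (totalDegree_mul _ _).trans (Nat.add_le_add_right ?_ _)
  refine (totalDegree_finsetSum _ _).trans (Finset.sup_le fun i hi => ?_)
  have hid : i < d := Finset.mem_range.mp hi
  calc (p ^ i * q ^ (d - 1 - i)).totalDegree
      ≤ i * p.totalDegree + (d - 1 - i) * q.totalDegree :=
        (totalDegree_mul _ _).trans (add_le_add (totalDegree_pow _ _) (totalDegree_pow _ _))
    _ ≤ i * 1 + (d - 1 - i) * 1 := by gcongr
    _ = d - 1 := by omega

theorem totalDegree_one_sub_sub_pow_add_X_pow_lt [Nontrivial R] (x : σ) (k : R) {d : ℕ}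
    (hd : d ≠ 0) : (1 - (X x - C k) ^ d + X x ^ d : MvPolynomial σ R).totalDegree < d := by
  have h := totalDegree_pow_sub_pow_le (p := X x - C k) (q := X x)
    ((totalDegree_sub _ _).trans (by simp)) (totalDegree_X x).le d
  rw [sub_sub_cancel_left, totalDegree_neg, totalDegree_C, add_zero] at h
  rw [sub_add]
  refine (totalDegree_sub _ _).trans_lt ?_
  rw [totalDegree_one]
  omega

theorem totalDegree_sum_one_sub_X_sub_C_pow_sub_C_add_sum_X_pow_lt [Nontrivial R] {ι : Type*}
    (s : Finset ι) (e : ι → σ) (c : ι → R) (b : R) {d : ℕ} (hd : d ≠ 0) :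
    ((∑ k ∈ s, (1 - (X (e k) - C (c k)) ^ d)) - C b + ∑ k ∈ s, X (e k) ^ d).totalDegree < d := by
  have hregroup : (∑ k ∈ s, (1 - (X (e k) - C (c k)) ^ d)) - C b + ∑ k ∈ s, X (e k) ^ d
      = (∑ k ∈ s, (1 - (X (e k) - C (c k)) ^ d + X (e k) ^ d)) - C b := by
    rw [sum_add_distrib]; ring
  rw [hregroup]
  refine (totalDegree_sub_C_le _ _).trans_lt ((totalDegree_finsetSum _ _).trans_lt ?_)
  exact (Finset.sup_lt_iff (Nat.pos_of_ne_zero hd)).mpr fun k _ =>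
    totalDegree_one_sub_sub_pow_add_X_pow_lt (e k) (c k) hd

end CommRing

theorem sum_X_pow_comp_eq_sum_C_card_mul [CommSemiring R] [Fintype σ] [DecidableEq σ] {ι : Type*}
    [Fintype ι] (e : ι → σ) (d : ℕ) :
    ∑ k, (X (e k) : MvPolynomial σ R) ^ d = ∑ i, C (#{k | e k = i} : R) * X i ^ d := by
  rw [← sum_fiberwise' univ e fun i => X i ^ d]
  simp only [sum_const, nsmul_eq_mul, map_natCast]

theorem coeff_prod_sum_C_mul_X_pow_eq_permanent {κ : Type*} [CommSemiring R]
    [Fintype κ] [DecidableEq κ] (A : Matrix κ κ R) {d : ℕ} (hd : d ≠ 0) :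
    coeff (Finsupp.equivFunOnFinite.symm fun _ => d) (∏ j, ∑ i, C (A i j) * X i ^ d)
      = A.permanent := by
  have hterm : ∀ g : κ → κ, ∏ j, C (A (g j) j) * X (g j) ^ d
      = monomial (∑ j, Finsupp.single (g j) d) (∏ j, A (g j) j) := by
    intro g
    simp only [C_mul_X_pow_eq_monomial, monomial_sum_prod]
  have hperm : (univ.filter fun g : κ → κ => Bijective g)
      = univ.map ⟨fun τ : Equiv.Perm κ => ⇑τ, DFunLike.coe_injective⟩ := by
    ext g
    simp only [mem_filter, mem_univ, true_and, mem_map, Embedding.coeFn_mk]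
    exact ⟨fun hg => ⟨Equiv.ofBijective g hg, rfl⟩, fun ⟨τ, hτ⟩ => hτ ▸ τ.bijective⟩
  simp only [Fintype.prod_sum, hterm, coeff_sum, coeff_monomial,
    Finsupp.sum_single_eq_equivFunOnFinite_symm_const_iff _ hd]
  rw [← sum_filter, hperm, sum_map]
  rfl

end MvPolynomial

theorem coeff_of_antifactor_polynomial_general
    (q n : ℕ) (hq : IsPrimePow q)
    (F : Type*) [Field F] [Fintype F]
    (σ : F → Equiv.Perm (Fin n))
    (M : Fin n → Fin n → ℕ)
    (hM : ∀ i j, M i j = (Finset.univ.filter fun k : F => σ k i = j).card)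
    (α : Fin n → F)
    (f : MvPolynomial (Fin n) F)
    (hf : f = ∏ j : Fin n,
        ((∑ k : F, (1 - (X ((σ k)⁻¹ j) - C k) ^ (q - 1))) - C (α j))) :
    MvPolynomial.coeff (Finsupp.equivFunOnFinite.symm fun _ : Fin n => q - 1) f
      = (-1) ^ n * ((∑ τ : Equiv.Perm (Fin n), ∏ i, M i (τ i) : ℕ) : F) := by
  have hd : q - 1 ≠ 0 := by have := hq.two_le; omega
  have hfiber : ∀ j, ∑ k : F, (X ((σ k)⁻¹ j) : MvPolynomial (Fin n) F) ^ (q - 1)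
      = ∑ i, C (Matrix.of (fun i j => (M i j : F)) i j) * X i ^ (q - 1) := fun j => by
    simp only [sum_X_pow_comp_eq_sum_C_card_mul, hM, Matrix.of_apply, Equiv.Perm.inv_eq_iff_eq,
      @eq_comm _ j]
  rw [hf, coeff_prod_eq_coeff_prod_of_totalDegree_sub_lt univ _
      (fun j => -∑ k : F, X ((σ k)⁻¹ j) ^ (q - 1)) (fun _ => q - 1)]
  · rw [prod_neg, card_univ, Fintype.card_fin, ← map_one C, ← map_neg, ← map_pow, coeff_C_mul]
    simp only [hfiber]
    rw [coeff_prod_sum_C_mul_X_pow_eq_permanent _ hd, ← Matrix.permanent_transpose]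
    push_cast
    rfl
  · intro j _
    rw [totalDegree_neg]
    exact (totalDegree_finsetSum _ _).trans (Finset.sup_le fun k _ => (totalDegree_X_pow _ _).le)
  · intro j _
    rw [sub_neg_eq_add]
    exact totalDegree_sum_one_sub_X_sub_C_pow_sub_C_add_sum_X_pow_lt _ _ _ _ hd
  · simp [Finsupp.degree_eq_sum]

theorem coeff_of_antifactor_polynomial
    (q n : ℕ) (hq : IsPrimePow q) (hn : 1 ≤ n)
    (F : Type*) [Field F] [Fintype F] [DecidableEq F] (hcard : Fintype.card F = q)
    (σ : F → Equiv.Perm (Fin n))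
    (M : Fin n → Fin n → ℕ)
    (hM : ∀ i j, M i j = (Finset.univ.filter fun k : F => σ k i = j).card)
    (α : Fin n → F)
    (f : MvPolynomial (Fin n) F)
    (hf : f = ∏ j : Fin n,
        ((∑ k : F, (1 - (X ((σ k)⁻¹ j) - C k) ^ (q - 1))) - C (α j))) :
    MvPolynomial.coeff (Finsupp.equivFunOnFinite.symm fun _ : Fin n => q - 1) f
      = (-1) ^ n * ((∑ τ : Equiv.Perm (Fin n), ∏ i, M i (τ i) : ℕ) : F) :=
  coeff_of_antifactor_polynomial_general q n hq F σ M hM α f hf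
end

section
/- Let $G$ be a finite simple cubic graph (every vertex has degree $3$). Suppose there exists a vertex $u$ of $G$ such that for every pair of edges $e, f$ incident to $u$, there is a graph automorphism of $G$ mapping $e$ to $f$. Then the number of perfect matchings of $G$ is divisible by $3$. -/
open SimpleGraph

private lemma pm_map_aux {V : Type*} {G : SimpleGraph V} (φ : G ≃g G) (u a b : V)
    (h : Sym2.map φ s(u, a) = s(u, b)) (M : G.Subgraph)
    (hM : M.IsPerfectMatching) (hadj : M.Adj u a) :
    (M.map φ.toHom).IsPerfectMatching ∧ (M.map φ.toHom).Adj u b := by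
  have hmatch : (M.map φ.toHom).IsMatching :=
    (SimpleGraph.Subgraph.Iso.isMatching_map φ).mpr hM.1
  have hspan : (M.map φ.toHom).IsSpanning := by
    intro v
    exact ⟨φ.symm v, hM.2 _, by simp⟩
  have hadj' : (M.map φ.toHom).Adj (φ u) (φ a) := ⟨u, a, hadj, rfl, rfl⟩
  have h2 : s(φ u, φ a) = s(u, b) := by simpa using h
  rw [Sym2.eq_iff] at h2
  refine ⟨⟨hmatch, hspan⟩, ?_⟩
  rcases h2 with ⟨h1, h2⟩ | ⟨h1, h2⟩
  · rwa [h1, h2] at hadj'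
  · rw [h1, h2] at hadj'
    exact hadj'.symm

private lemma pm_map_inv {V : Type*} {G : SimpleGraph V} (φ : G ≃g G) (M : G.Subgraph) :
    (M.map φ.toHom).map φ.symm.toHom = M := by
  rw [← SimpleGraph.Subgraph.map_comp]
  have : (φ.symm.toHom.comp φ.toHom) = SimpleGraph.Hom.id := by
    ext v
    simp
  rw [this, SimpleGraph.Subgraph.map_id]

theorem cubic_edge_transitive_vertex_pm_div_three
    (V : Type*) [Fintype V] [DecidableEq V]
    (G : SimpleGraph V) [DecidableRel G.Adj]
    (hcubic : ∀ v : V, G.degree v = 3)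
    (u : V)
    (hu : ∀ e f : Sym2 V, e ∈ G.edgeSet → f ∈ G.edgeSet → u ∈ e → u ∈ f →
        ∃ φ : G ≃g G, Sym2.map φ e = f) :
    3 ∣ {M : G.Subgraph | M.IsPerfectMatching}.ncard := by
  classical
  set S : Set G.Subgraph := {M : G.Subgraph | M.IsPerfectMatching} with hS
  have : Finite G.Subgraph := by
    refine Finite.of_injective
      (fun H : G.Subgraph => (H.verts, {p : V × V | H.Adj p.1 p.2})) ?_
    intro H1 H2 h
    rw [Prod.ext_iff] at h
    ext x y
    · exact Set.ext_iff.mp h.1 x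
    · exact Set.ext_iff.mp h.2 (x, y)
  have hfin : S.Finite := Set.toFinite S
  set T : Finset G.Subgraph := hfin.toFinset with hT
  have hmemT : ∀ M : G.Subgraph, M ∈ T ↔ M.IsPerfectMatching := by
    intro M; simp [hT, hfin.mem_toFinset, hS]
  have hncard : S.ncard = T.card := Set.ncard_eq_toFinset_card S hfin
  rw [hncard]
  -- partner function
  have hpartner : ∀ M ∈ T, ∃ w, M.Adj u w := by
    intro M hM
    rw [hmemT] at hM
    obtain ⟨w, hw, -⟩ := hM.1 (hM.2 u)
    exact ⟨w, hw⟩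
  set p : G.Subgraph → V := fun M => if h : ∃ w, M.Adj u w then h.choose else u with hp
  have hpspec : ∀ M ∈ T, ∀ a : V, p M = a ↔ M.Adj u a := by
    intro M hM a
    have hex := hpartner M hM
    have hchoose : M.Adj u (p M) := by
      simp only [hp, dif_pos hex]
      exact hex.choose_spec
    rw [hmemT] at hM
    constructor
    · rintro rfl; exact hchoose
    · intro ha
      exact ((hM.1 (hM.2 u)).unique hchoose ha) 
  -- fiberwise count
  have hfiber : ∀ M ∈ T, p M ∈ G.neighborFinset u := by
    intro M hM
    rw [SimpleGraph.mem_neighborFinset]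
    exact ((hpspec M hM (p M)).mp rfl).adj_sub
  rw [Finset.card_eq_sum_card_fiberwise hfiber]
  -- all fibers have equal cardinality
  have hkey : ∀ a ∈ G.neighborFinset u, ∀ b ∈ G.neighborFinset u,
      (T.filter fun M => p M = a).card = (T.filter fun M => p M = b).card := by
    intro a ha b hb
    rw [SimpleGraph.mem_neighborFinset] at ha hb
    obtain ⟨φ, hφ⟩ := hu s(u, a) s(u, b) ha hb (by simp) (by simp)
    have hφ' : Sym2.map φ.symm s(u, b) = s(u, a) := by
      rw [← hφ, Sym2.map_map]
      simp
    refine Finset.card_bij (fun M _ => M.map φ.toHom) ?_ ?_ ?_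
    · intro M hM
      rw [Finset.mem_filter] at hM ⊢
      obtain ⟨hMT, hMa⟩ := hM
      have hPM := (hmemT M).mp hMT
      have := pm_map_aux φ u a b hφ M hPM ((hpspec M hMT a).mp hMa)
      have hT' : M.map φ.toHom ∈ T := (hmemT _).mpr this.1
      exact ⟨hT', (hpspec _ hT' b).mpr this.2⟩
    · intro M₁ h₁ M₂ h₂ heq
      have := congrArg (fun N => SimpleGraph.Subgraph.map φ.symm.toHom N) heq
      simpa [pm_map_inv φ] using this
    · intro N hN
      rw [Finset.mem_filter] at hN
      obtain ⟨hNT, hNb⟩ := hN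
      have hPM := (hmemT N).mp hNT
      have := pm_map_aux φ.symm u b a hφ' N hPM ((hpspec N hNT b).mp hNb)
      have hMT : N.map φ.symm.toHom ∈ T := (hmemT _).mpr this.1
      refine ⟨N.map φ.symm.toHom, Finset.mem_filter.mpr ⟨hMT, (hpspec _ hMT a).mpr this.2⟩, ?_⟩
      have := pm_map_inv φ.symm N
      simpa using this
  -- sum over 3 neighbors
  have hcard : (G.neighborFinset u).card = 3 := by
    rw [SimpleGraph.card_neighborFinset_eq_degree]; exact hcubic u
  obtain ⟨a₀, ha₀⟩ : (G.neighborFinset u).Nonempty := by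
    rw [← Finset.card_pos, hcard]; norm_num
  have hsum : ∑ a ∈ G.neighborFinset u, (T.filter fun M => p M = a).card
      = 3 * (T.filter fun M => p M = a₀).card := by
    rw [Finset.sum_congr rfl (fun a ha => hkey a ha a₀ ha₀), Finset.sum_const, hcard, smul_eq_mul]
  rw [hsum]
  exact Dvd.intro _ rfl
end

section
/- Let $q \geq 3$ and $n \geq 1$ be integers, and let $M : \mathrm{Fin}\,n \to \mathrm{Fin}\,n \to \mathbb{N}$ be a matrix with every row sum and every column sum equal to $q$ (the biadjacency matrix of a $q$-regular bipartite multigraph). Suppose there exists a matrix $M' : \mathrm{Fin}\,n \to \mathrm{Fin}\,n \to \mathbb{N}$ with $M'(i,j) \leq M(i,j)$ for all $i,j$, with every row sum and every column sum of $M'$ equal to $3$ (a $3$-regular spanning subgraph), and such that the permanent $\sum_{\sigma \in S_n} \prod_i M'(i,\sigma(i))$ is not divisible by $3$. Then there exists a matrix $N : \mathrm{Fin}\,n \to \mathrm{Fin}\,n \to \mathbb{N}$ with $N(i,j) \leq M(i,j)$ for all $i,j$, every row sum of $N$ equal to $1$, and every column sum of $N$ different from $1$. -/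
/-!
Reduce modulo 3, where the row sums of `M'` vanish but its permanent does not. For a matrix `A`
with zero row sums over a commutative ring,
`∑ x : ι → ι, ∏ i, A i (x i) * ∏ j, (#x⁻¹{j} - 1) = per A`:
expand each factor `#x⁻¹{j} - 1 = ∑ i, [x i = j] - 1` and sum over `x` first; a row `i` that no
chosen term constrains contributes its row sum `0`, a row constrained twice contributes `0`, and
the surviving choices are exactly the permutations. Hence some map `x` has `∏ i, M' i (x i) ≢ 0`
and no fibre of size `1`; picking the edge `(i, x i)` at each left vertex gives `N`.
-/

open Finset

variable {ι R : Type*} [Fintype ι]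

lemma exists_perm_of_forall_exists_fiber_eq {ψ : ι → Option ι}
    (h : ∀ i, ∃ v, ∀ j, ψ j = some i ↔ j = v) :
    ∃ σ : Equiv.Perm ι, (fun j => some (σ.symm j)) = ψ := by
  choose u hu using h
  have hψu : ∀ i, ψ (u i) = some i := fun i => (hu i (u i)).2 rfl
  have hinj : Function.Injective u := fun a b hab => Option.some_injective _ <| by
    rw [← hψu a, ← hψu b, hab]
  let σ := Equiv.ofBijective u hinj.bijective_of_finite
  refine ⟨σ, funext fun j => ?_⟩
  rw [← hψu]
  exact congrArg ψ (σ.apply_symm_apply j)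

variable [DecidableEq ι]

lemma exists_forall_iff_eq_of_sum_ite_ne_zero [AddCommMonoid R] {a : ι → R} (ha : ∑ v, a v = 0)
    (P : ι → Prop) [DecidablePred P] (h : ∑ v, (if ∀ j, P j → v = j then a v else 0) ≠ 0) :
    ∃ v, ∀ j, P j ↔ j = v := by
  obtain ⟨v, -, hv⟩ := exists_ne_zero_of_sum_ne_zero h
  have hPv : ∀ j, P j → v = j := by
    by_contra hcon
    exact hv (if_neg hcon)
  obtain ⟨j₀, hj₀⟩ : ∃ j, P j := by
    by_contra! hnone
    simp [hnone, ha] at h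
  refine ⟨v, fun j => ⟨fun hj => (hPv j hj).symm, ?_⟩⟩
  rintro rfl
  rwa [hPv j₀ hj₀]

variable [CommRing R]

/-- `ψ j = none` selects the `-1` of the `j`-th factor, `ψ j = some i` the summand `[x i = j]`. -/
lemma prod_natCast_card_fiber_sub_one (x : ι → ι) :
    ∏ j, ((#{i | x i = j} : R) - 1) =
      ∑ ψ : ι → Option ι, ∏ j, (ψ j).elim (-1) fun i => if x i = j then 1 else 0 := by
  refine (prod_congr rfl fun j _ => ?_).trans
    (Fintype.prod_sum fun j (o : Option ι) => o.elim (-1) fun i => if x i = j then (1 : R) else 0)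
  rw [Fintype.sum_option, natCast_card_filter]
  simp only [Option.elim]
  ring

lemma sum_prod_mul_prod_option_elim (A : ι → ι → R) (ψ : ι → Option ι) :
    ∑ x : ι → ι, (∏ i, A i (x i)) * ∏ j, (ψ j).elim (-1) (fun i => if x i = j then 1 else 0) =
      (-1) ^ #{j | ψ j = none} * ∏ i, ∑ v, if ∀ j, ψ j = some i → v = j then A i v else 0 := by
  have hsplit : ∀ x : ι → ι, ∏ j, (ψ j).elim (-1) (fun i => if x i = j then 1 else 0) =
      (-1) ^ #{j | ψ j = none} * ∏ i, if ∀ j, ψ j = some i → x i = j then (1 : R) else 0 := by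
    intro x
    have hfactor : ∀ j, (ψ j).elim (-1) (fun i => if x i = j then 1 else 0) =
        (if ψ j = none then -1 else 1) * if ∀ i, ψ j = some i → x i = j then (1 : R) else 0 := by
      intro j
      cases ψ j <;> simp
    rw [prod_congr rfl fun j _ => hfactor j, prod_mul_distrib, prod_ite, prod_const, prod_const_one,
      mul_one, Fintype.prod_boole, Fintype.prod_boole]
    exact congrArg _ (if_congr forall_comm rfl rfl)
  simp_rw [hsplit, mul_left_comm _ ((-1 : R) ^ _), ← mul_sum, ← prod_mul_distrib, mul_ite, mul_one,
    mul_zero]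
  rw [Fintype.prod_sum]

theorem sum_prod_mul_prod_card_fiber_sub_one (A : ι → ι → R) (hA : ∀ i, ∑ j, A i j = 0) :
    ∑ x : ι → ι, (∏ i, A i (x i)) * ∏ j, ((#{i | x i = j} : R) - 1) =
      ∑ σ : Equiv.Perm ι, ∏ i, A i (σ i) := by
  simp_rw [prod_natCast_card_fiber_sub_one, mul_sum]
  rw [sum_comm]
  simp_rw [sum_prod_mul_prod_option_elim]
  symm
  refine Fintype.sum_of_injective (fun σ j => some (σ.symm j)) ?_ _ _ ?_ fun σ => ?_
  · intro σ τ h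
    exact Equiv.symm_bijective.injective <|
      Equiv.ext fun j => Option.some_injective _ (congrFun h j)
  · intro ψ hψ
    by_contra hne
    refine hψ (exists_perm_of_forall_exists_fiber_eq fun i => ?_)
    have hfactors := right_ne_zero_of_mul hne
    exact exists_forall_iff_eq_of_sum_ite_ne_zero (hA i) _
      fun h => hfactors (prod_eq_zero (mem_univ i) h)
  · simp [Equiv.symm_apply_eq]

theorem exists_forall_ne_zero_card_fiber_ne_one {A : ι → ι → R} (hA : ∀ i, ∑ j, A i j = 0)
    (hperm : ∑ σ : Equiv.Perm ι, ∏ i, A i (σ i) ≠ 0) :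
    ∃ x : ι → ι, (∀ i, A i (x i) ≠ 0) ∧ ∀ j, (#{i | x i = j} : R) ≠ 1 := by
  rw [← sum_prod_mul_prod_card_fiber_sub_one A hA] at hperm
  obtain ⟨x, -, hx⟩ := exists_ne_zero_of_sum_ne_zero hperm
  refine ⟨x, fun i => ?_, fun j => ?_⟩
  · exact fun h => left_ne_zero_of_mul hx (prod_eq_zero (mem_univ i) h)
  · exact sub_ne_zero.mp fun h => right_ne_zero_of_mul hx (prod_eq_zero (mem_univ j) h)

theorem antifactor_from_cubic_spanning_subgraph_general
    (n : ℕ)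
    (M : Fin n → Fin n → ℕ)
    (M' : Fin n → Fin n → ℕ)
    (hle : ∀ i j, M' i j ≤ M i j)
    (hrow' : ∀ i, ∑ j, M' i j = 3)
    (hpm : ¬ (3 ∣ ∑ σ : Equiv.Perm (Fin n), ∏ i, M' i (σ i))) :
    ∃ N : Fin n → Fin n → ℕ,
      (∀ i j, N i j ≤ M i j) ∧
      (∀ i, ∑ j, N i j = 1) ∧
      (∀ j, ∑ i, N i j ≠ 1) := by
  have hrow : ∀ i, ∑ j, (M' i j : ZMod 3) = 0 := fun i => by
    rw [← Nat.cast_sum, hrow' i]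
    rfl
  have hperm : ∑ σ : Equiv.Perm (Fin n), ∏ i, (M' i (σ i) : ZMod 3) ≠ 0 := by
    simpa only [← Nat.cast_prod, ← Nat.cast_sum, Ne, ZMod.natCast_eq_zero_iff] using hpm
  obtain ⟨x, hx, hfib⟩ := exists_forall_ne_zero_card_fiber_ne_one hrow hperm
  refine ⟨fun i j => if x i = j then 1 else 0, fun i j => ?_, fun i => by simp, fun j => ?_⟩
  · dsimp only
    split_ifs with h
    · subst h
      have hpos : M' i (x i) ≠ 0 := fun h0 => hx i (by rw [h0, Nat.cast_zero])
      exact (Nat.one_le_iff_ne_zero.mpr hpos).trans (hle i _)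
    · exact Nat.zero_le _
  · rw [← card_filter]
    exact fun h => hfib j (by rw [h, Nat.cast_one])

theorem antifactor_from_cubic_spanning_subgraph
    (q n : ℕ) (hq : 3 ≤ q) (hn : 1 ≤ n)
    (M : Fin n → Fin n → ℕ)
    (hrow : ∀ i, ∑ j, M i j = q)
    (hcol : ∀ j, ∑ i, M i j = q)
    (M' : Fin n → Fin n → ℕ)
    (hle : ∀ i j, M' i j ≤ M i j)
    (hrow' : ∀ i, ∑ j, M' i j = 3)
    (hcol' : ∀ j, ∑ i, M' i j = 3)
    (hpm : ¬ (3 ∣ ∑ σ : Equiv.Perm (Fin n), ∏ i, M' i (σ i))) :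
    ∃ N : Fin n → Fin n → ℕ,
      (∀ i j, N i j ≤ M i j) ∧
      (∀ i, ∑ j, N i j = 1) ∧
      (∀ j, ∑ i, N i j ≠ 1) :=
  antifactor_from_cubic_spanning_subgraph_general n M M' hle hrow' hpm
end
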